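/- In a discrete inverse category, restriction idempotents are phases of the chosen Frobenius structures: for every morphism f : X → Y, writing e := f̄ : X → X for its restriction idempotent, one has e;Δ_X = Δ_X;(e ⊗ id_X) = Δ_X;(id_X ⊗ e) and (e ⊗ id_X);∇_X = (id_X ⊗ e);∇_X = ∇_X;e, where ∇_X := (Δ_X)°. -/

import Mathlib

/-!
Cocommutativity moves a restriction idempotent `e` from one leg of `Δ` to the other: by (R4),
`Δ ≫ (e ⊗ 𝟙)` equals `p ≫ Δ` for a restriction idempotent `p`, and `p ≫ Δ` is invariant under
the braiding. Naturality of `Δ` at `e` together with `e ≫ e = e` then gives `e ≫ Δ = Δ ≫ (e ⊗ 𝟙)`.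
The statements about `∇` follow by conjugating with `∇ ≫ Δ = rst ∇`, which commutes with every
restriction idempotent, and using `Δ ≫ ∇ = 𝟙`.
-/

open CategoryTheory MonoidalCategory

universe v u

/-- A restriction category: a category equipped with a restriction operator
sending `f : A ⟶ B` to `f̄ : A ⟶ A`, satisfying (R1)–(R4).
Composition `f ≫ g` is diagrammatic (`f` then `g`). -/
class RestrictionCategory (C : Type u) [Category.{v} C] where
  rst : ∀ {A B : C}, (A ⟶ B) → (A ⟶ A)
  rst_comp : ∀ {A B : C} (f : A ⟶ B), rst f ≫ f = f
  rst_comm : ∀ {A B B' : C} (f : A ⟶ B) (g : A ⟶ B'), rst f ≫ rst g = rst g ≫ rst f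
  rst_rst : ∀ {A B B' : C} (f : A ⟶ B) (g : A ⟶ B'), rst (rst f ≫ g) = rst f ≫ rst g
  comp_rst : ∀ {A B B' : C} (f : A ⟶ B) (g : B ⟶ B'), f ≫ rst g = rst (f ≫ g) ≫ f

/-- An inverse category: a restriction category in which every morphism is a
partial isomorphism; `pinv f` is the partial inverse `f°`. -/
class InverseCategory (C : Type u) [Category.{v} C] extends RestrictionCategory C where
  pinv : ∀ {A B : C}, (A ⟶ B) → (B ⟶ A)
  comp_pinv : ∀ {A B : C} (f : A ⟶ B), f ≫ pinv f = rst f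
  pinv_comp : ∀ {A B : C} (f : A ⟶ B), pinv f ≫ f = rst (pinv f)

open RestrictionCategory InverseCategory

/-- The "middle-four" interchange map `(A⊗B)⊗(A'⊗B') ⟶ (A⊗A')⊗(B⊗B')`
(i.e. `id ⊗ σ ⊗ id` with coherence made explicit). -/
def midSwap (C : Type u) [Category.{v} C] [MonoidalCategory C] [SymmetricCategory C]
    (A B A' B' : C) : (A ⊗ B) ⊗ (A' ⊗ B') ⟶ (A ⊗ A') ⊗ (B ⊗ B') :=
  (α_ A B (A' ⊗ B')).hom ≫
    (𝟙 A ⊗ₘ ((α_ B A' B').inv ≫ ((β_ B A').hom ⊗ₘ 𝟙 B') ≫ (α_ A' B B').hom)) ≫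
      (α_ A A' (B ⊗ B')).inv

/-- A discrete inverse category: a symmetric monoidal inverse category whose
tensor preserves restriction in each argument, equipped with a chosen
coassociative, cocommutative, natural comultiplication `Δ_X : X ⟶ X ⊗ X`
whose partial inverse `∇_X := (Δ_X)°` satisfies the (semi-)Frobenius and
specialness laws, compatibly with the tensor. -/
class DiscreteInverseCategory (C : Type u) [Category.{v} C] [MonoidalCategory C]
    [SymmetricCategory C] extends InverseCategory C where
  rst_tensor : ∀ {A B A' B' : C} (f : A ⟶ B) (g : A' ⟶ B'), rst (f ⊗ₘ g) = rst f ⊗ₘ rst g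
  Δ : ∀ X : C, X ⟶ X ⊗ X
  Δ_coassoc : ∀ X : C, Δ X ≫ (Δ X ⊗ₘ 𝟙 X) ≫ (α_ X X X).hom = Δ X ≫ (𝟙 X ⊗ₘ Δ X)
  Δ_cocomm : ∀ X : C, Δ X ≫ (β_ X X).hom = Δ X
  Δ_natural : ∀ {X Y : C} (f : X ⟶ Y), f ≫ Δ Y = Δ X ≫ (f ⊗ₘ f)
  frobenius : ∀ X : C,
    pinv (Δ X) ≫ Δ X = (𝟙 X ⊗ₘ Δ X) ≫ (α_ X X X).inv ≫ (pinv (Δ X) ⊗ₘ 𝟙 X)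
  frobenius' : ∀ X : C,
    pinv (Δ X) ≫ Δ X = (Δ X ⊗ₘ 𝟙 X) ≫ (α_ X X X).hom ≫ (𝟙 X ⊗ₘ pinv (Δ X))
  special : ∀ X : C, Δ X ≫ pinv (Δ X) = 𝟙 X
  Δ_tensor : ∀ X Y : C, Δ (X ⊗ Y) = (Δ X ⊗ₘ Δ Y) ≫ midSwap C X X Y Y
  Δ_unit : Δ (𝟙_ C) = (λ_ (𝟙_ C)).inv

open DiscreteInverseCategory

variable {C : Type u} [Category.{v} C]

section Restriction

variable [RestrictionCategory C]

lemma rst_id (A : C) : rst (𝟙 A) = 𝟙 A := by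
  simpa using rst_comp (𝟙 A)

lemma rst_idem {A B : C} (f : A ⟶ B) : rst f ≫ rst f = rst f := by
  rw [← rst_rst, rst_comp]

end Restriction

section Inverse

variable [InverseCategory C]

lemma rst_comp_pinv_of_comp_eq_comp_rst {A B B' : C} {s : A ⟶ B} {e : A ⟶ A} (g : B ⟶ B')
    (hs : s ≫ pinv s = 𝟙 A) (h : e ≫ s = s ≫ rst g) :
    rst g ≫ pinv s = pinv s ≫ e :=
  calc rst g ≫ pinv s = rst g ≫ rst (pinv s) ≫ pinv s := by rw [rst_comp]
    _ = rst (pinv s) ≫ rst g ≫ pinv s := by rw [← Category.assoc, rst_comm, Category.assoc]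
    _ = pinv s ≫ (s ≫ rst g) ≫ pinv s := by rw [← pinv_comp]; simp only [Category.assoc]
    _ = pinv s ≫ e := by rw [← h, Category.assoc, hs, Category.comp_id]

end Inverse

section Discrete

variable [MonoidalCategory C] [SymmetricCategory C] [DiscreteInverseCategory C]

lemma rst_tensorHom_id {A B : C} (f : A ⟶ B) (X : C) : rst (f ⊗ₘ 𝟙 X) = rst f ⊗ₘ 𝟙 X := by
  rw [rst_tensor, rst_id]

lemma rst_id_tensorHom {A B : C} (f : A ⟶ B) (X : C) : rst (𝟙 X ⊗ₘ f) = 𝟙 X ⊗ₘ rst f := by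
  rw [rst_tensor, rst_id]

lemma Δ_comp_rst_tensorHom_id {X Y : C} (f : X ⟶ Y) :
    Δ X ≫ (rst f ⊗ₘ 𝟙 X) = Δ X ≫ (𝟙 X ⊗ₘ rst f) := by
  have hR4 : Δ X ≫ (rst f ⊗ₘ 𝟙 X) = rst (Δ X ≫ (f ⊗ₘ 𝟙 X)) ≫ Δ X := by
    rw [← rst_tensorHom_id, comp_rst]
  symm
  calc Δ X ≫ (𝟙 X ⊗ₘ rst f) = Δ X ≫ (β_ X X).hom ≫ (𝟙 X ⊗ₘ rst f) := by
        rw [← Category.assoc, Δ_cocomm]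
    _ = (Δ X ≫ (rst f ⊗ₘ 𝟙 X)) ≫ (β_ X X).hom := by
        rw [← BraidedCategory.braiding_naturality, Category.assoc]
    _ = rst (Δ X ≫ (f ⊗ₘ 𝟙 X)) ≫ Δ X := by rw [hR4, Category.assoc, Δ_cocomm]
    _ = Δ X ≫ (rst f ⊗ₘ 𝟙 X) := hR4.symm

lemma rst_comp_Δ {X Y : C} (f : X ⟶ Y) : rst f ≫ Δ X = Δ X ≫ (rst f ⊗ₘ 𝟙 X) :=
  calc rst f ≫ Δ X = Δ X ≫ (rst f ⊗ₘ rst f) := Δ_natural _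
    _ = Δ X ≫ (𝟙 X ⊗ₘ rst f) ≫ (rst f ⊗ₘ 𝟙 X) := by
        rw [tensorHom_comp_tensorHom, Category.id_comp, Category.comp_id]
    _ = Δ X ≫ (rst f ⊗ₘ 𝟙 X) ≫ (rst f ⊗ₘ 𝟙 X) := by
        rw [← Category.assoc, ← Δ_comp_rst_tensorHom_id, Category.assoc]
    _ = Δ X ≫ (rst f ⊗ₘ 𝟙 X) := by rw [tensorHom_comp_tensorHom, rst_idem, Category.comp_id]

end Discrete

/-- in a discrete inverse category, restriction idempotents
are phases of the chosen Frobenius structures: for `f : X ⟶ Y` and `e := f̄`,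
`e;Δ_X = Δ_X;(e ⊗ id_X) = Δ_X;(id_X ⊗ e)` and
`(e ⊗ id_X);∇_X = (id_X ⊗ e);∇_X = ∇_X;e`. -/
theorem restriction_idempotents_are_phases {C : Type u} [Category.{v} C] [MonoidalCategory C]
    [SymmetricCategory C] [DiscreteInverseCategory C] {X Y : C} (f : X ⟶ Y) :
    rst f ≫ Δ X = Δ X ≫ (rst f ⊗ₘ 𝟙 X) ∧
    Δ X ≫ (rst f ⊗ₘ 𝟙 X) = Δ X ≫ (𝟙 X ⊗ₘ rst f) ∧
    (rst f ⊗ₘ 𝟙 X) ≫ pinv (Δ X) = (𝟙 X ⊗ₘ rst f) ≫ pinv (Δ X) ∧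
    (𝟙 X ⊗ₘ rst f) ≫ pinv (Δ X) = pinv (Δ X) ≫ rst f := by
  have hleft := rst_comp_Δ f
  have hswap := Δ_comp_rst_tensorHom_id f
  have hright := hleft.trans hswap
  have hleft' := rst_comp_pinv_of_comp_eq_comp_rst (f ⊗ₘ 𝟙 X) (special X)
    (by rwa [rst_tensorHom_id])
  have hright' := rst_comp_pinv_of_comp_eq_comp_rst (𝟙 X ⊗ₘ f) (special X)
    (by rwa [rst_id_tensorHom])
  rw [rst_tensorHom_id] at hleft'
  rw [rst_id_tensorHom] at hright'
  exact ⟨hleft, hswap, hleft'.trans hright'.symm, hright'⟩
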